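/- For a > 0 define v_a : ℝ → ℝ by v_a(x) = 2·arctan(x/a). Let n ≥ 1, let K, L ≥ 0 be natural numbers, let α > 0, ε ∈ {0,1}, a_1,…,a_K > 0 and b_1,…,b_L > 0, and let μ = (μ_1,…,μ_n) ∈ ℤ^n with μ_1 > μ_2 > … > μ_n > 0. Then there exists a unique ξ = (ξ_1,…,ξ_n) ∈ ℝ^n satisfying, for every j ∈ {1,…,n}, the system 2α ξ_j + Σ_{k=1}^K v_{a_k}(ξ_j) + Σ_{j′≠j} Σ_{l=1}^L ( v_{b_l}(ξ_{j′} + ξ_j) − v_{b_l}(ξ_{j′} − ξ_j) ) = 2π(μ_j + ε/2). Moreover this solution satisfies the rational Bethe equations of type B: for every j, exp(2i α ξ_j) = (−1)^ε · ∏_{k=1}^K (i a_k + ξ_j)/(i a_k − ξ_j) · ∏_{j′≠j} ∏_{l=1}^L ( (i b_l + ξ_j + ξ_{j′})/(i b_l − ξ_j − ξ_{j′}) ) · ( (i b_l + ξ_j − ξ_{j′})/(i b_l − ξ_j + ξ_{j′}) ) as identities of complex numbers. -/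

import Mathlib

open Real Finset

/-- The rational function `v_a(x) = 2 arctan(x/a)`. -/
noncomputable def vRat (a x : ℝ) : ℝ := 2 * Real.arctan (x / a)

/-- The rational type B Bethe critical-point system. -/
def ratBSysMu (n K L : ℕ) (α : ℝ) (ε : ℕ) (a : Fin K → ℝ) (b : Fin L → ℝ)
    (μ : Fin n → ℤ) (ξ : Fin n → ℝ) : Prop :=
  ∀ j : Fin n,
    2 * α * ξ j + (∑ k, vRat (a k) (ξ j)) +
    (∑ j' ∈ Finset.univ.erase j, ∑ l,
      (vRat (b l) (ξ j' + ξ j) - vRat (b l) (ξ j' - ξ j)))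
    = 2 * π * ((μ j : ℝ) + (ε : ℝ) / 2)

/-!
The system says `∂V/∂ξ_j = 0` for the potential `V`, built from the primitives `∫₀ˣ v_a`.
These primitives are nonnegative, so the quadratic term makes `V` coercive and it attains a
global minimum, which solves the system. Each `v_a` is odd and increasing; after symmetrising
the pair terms under `j ↔ j'` this makes the left-hand side `F` of the system strongly monotone,
`∑ⱼ (F ξ - F η)ⱼ (ξ - η)ⱼ ≥ 2α ∑ⱼ (ξ - η)ⱼ²`, whence uniqueness. The Bethe equations follow by
exponentiating the system with `exp (-i v_a(x)) = (ia + x)/(ia - x)`.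
-/

open Filter

lemma vRat_neg (a x : ℝ) : vRat a (-x) = -vRat a x := by
  simp [vRat, neg_div, Real.arctan_neg]

lemma vRat_zero (a : ℝ) : vRat a 0 = 0 := by simp [vRat]

lemma vRat_strictMono {a : ℝ} (ha : 0 < a) : StrictMono (vRat a) := fun x y h => by
  unfold vRat
  gcongr

lemma continuous_vRat (a : ℝ) : Continuous (vRat a) := by
  unfold vRat; fun_prop

open Complex in
lemma exp_neg_vRat_mul_I {a : ℝ} (ha : a ≠ 0) (x : ℝ) :
    exp (-(vRat a x : ℂ) * I) = (I * a + x) / (I * a - x) := by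
  have hre : ∀ s : ℂ, s.re = 0 → 1 + s ≠ 0 := fun s hs h => by
    simpa [hs] using congrArg re h
  have hplus : 1 + (x / a : ℂ) * I ≠ 0 := hre _ (by simp [div_ofReal_re])
  have hminus : 1 - (x / a : ℂ) * I ≠ 0 := by
    rw [sub_eq_add_neg]; exact hre _ (by simp [div_ofReal_re])
  -- `Complex.arctan z = -I/2 * log ((1 + zI)/(1 - zI))`, so the exponent is `-log` of that ratio
  rw [vRat, ofReal_mul, ofReal_arctan, Complex.arctan, ofReal_div,
    show -(((2 : ℝ) : ℂ) * (-I / 2 * log ((1 + (x / a : ℂ) * I) / (1 - (x / a : ℂ) * I)))) * I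
      = -log ((1 + (x / a : ℂ) * I) / (1 - (x / a : ℂ) * I)) by
      push_cast; ring_nf; rw [I_sq]; ring,
    Complex.exp_neg, exp_log (div_ne_zero hplus hminus)]
  have ha' : (a : ℂ) ≠ 0 := by exact_mod_cast ha
  have hden : I * a - x ≠ 0 := by
    intro h; apply hplus; field_simp; linear_combination (-I) * h + (a : ℂ) * I_sq
  rw [inv_div, div_eq_div_iff hplus hden]
  field_simp
  linear_combination (-2 * a * x) * I_sq

noncomputable def vRatPrimitive (a x : ℝ) : ℝ := ∫ t in (0 : ℝ)..x, vRat a t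

lemma hasDerivAt_vRatPrimitive (a x : ℝ) : HasDerivAt (vRatPrimitive a) (vRat a x) x :=
  ((continuous_vRat a).integral_hasStrictDerivAt 0 x).hasDerivAt

@[fun_prop]
lemma continuous_vRatPrimitive (a : ℝ) : Continuous (vRatPrimitive a) :=
  continuous_iff_continuousAt.2 fun x => (hasDerivAt_vRatPrimitive a x).continuousAt

lemma vRatPrimitive_nonneg {a : ℝ} (ha : 0 < a) (x : ℝ) : 0 ≤ vRatPrimitive a x := by
  have hmono := (vRat_strictMono ha).monotone
  rcases le_total 0 x with hx | hx
  · refine intervalIntegral.integral_nonneg hx fun t ht => ?_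
    simpa [vRat_zero] using hmono ht.1
  · rw [vRatPrimitive, intervalIntegral.integral_symm, ← intervalIntegral.integral_neg]
    refine intervalIntegral.integral_nonneg hx fun t ht => ?_
    simpa [vRat_zero] using hmono ht.2

section PairSums

variable {ι : Type*} [Fintype ι] [DecidableEq ι]

lemma Finset.sum_sum_erase_swap {M : Type*} [AddCommMonoid M] (G : ι → ι → M) :
    ∑ p, ∑ q ∈ univ.erase p, G q p = ∑ p, ∑ q ∈ univ.erase p, G p q := by
  refine Finset.sum_comm' fun p q => ?_
  simp only [mem_univ, mem_erase, true_and, and_true]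
  exact ne_comm

lemma Finset.sum_sum_erase_nonneg_of_add_swap {G : ι → ι → ℝ}
    (hG : ∀ p q, 0 ≤ G p q + G q p) : 0 ≤ ∑ p, ∑ q ∈ univ.erase p, G p q := by
  have hsymm : 2 * ∑ p, ∑ q ∈ univ.erase p, G p q = ∑ p, ∑ q ∈ univ.erase p, (G p q + G q p) := by
    rw [two_mul]
    nth_rw 2 [← sum_sum_erase_swap G]
    simp only [sum_add_distrib]
  have : 0 ≤ ∑ p, ∑ q ∈ univ.erase p, (G p q + G q p) :=
    sum_nonneg fun p _ => sum_nonneg fun q _ => hG p q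
  linarith

lemma Finset.sum_sum_erase_eq_add {M : Type*} [AddCommMonoid M] (G : ι → ι → M) (j : ι) :
    ∑ p, ∑ q ∈ univ.erase p, G p q =
      ∑ q ∈ univ.erase j, (G j q + G q j) +
        ∑ p ∈ univ.erase j, ∑ q ∈ (univ.erase p).erase j, G p q := by
  calc ∑ p, ∑ q ∈ univ.erase p, G p q
      = ∑ q ∈ univ.erase j, G j q + ∑ p ∈ univ.erase j, ∑ q ∈ univ.erase p, G p q :=
        (add_sum_erase univ (fun p => ∑ q ∈ univ.erase p, G p q) (mem_univ j)).symm
    _ = ∑ q ∈ univ.erase j, G j q +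
          ∑ p ∈ univ.erase j, (G p j + ∑ q ∈ (univ.erase p).erase j, G p q) := by
        congr 1
        exact sum_congr rfl fun p hp =>
          (add_sum_erase _ (G p) (mem_erase.2 ⟨(ne_of_mem_erase hp).symm, mem_univ j⟩)).symm
    _ = _ := by rw [sum_add_distrib, sum_add_distrib, add_assoc]

lemma hasDerivAt_sum_update {f : ι → ℝ → ℝ} {ξ : ι → ℝ} {j : ι} {f' : ℝ}
    (hf : HasDerivAt (f j) f' (ξ j)) :
    HasDerivAt (fun t => ∑ p, f p (Function.update ξ j t p)) f' (ξ j) := by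
  have hsplit : (fun t => ∑ p, f p (Function.update ξ j t p)) =
      fun t => f j t + ∑ p ∈ univ.erase j, f p (ξ p) := by
    funext t
    rw [← add_sum_erase _ _ (mem_univ j), Function.update_self]
    congr 1
    exact sum_congr rfl fun p hp => by rw [Function.update_of_ne (ne_of_mem_erase hp)]
  rw [hsplit]
  exact hf.add_const _

lemma hasDerivAt_sum_sum_erase_update {g : ℝ → ℝ → ℝ} {ξ : ι → ℝ} {j : ι} {g₁ g₂ : ι → ℝ}
    (h₁ : ∀ q, HasDerivAt (fun t => g t (ξ q)) (g₁ q) (ξ j))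
    (h₂ : ∀ q, HasDerivAt (fun t => g (ξ q) t) (g₂ q) (ξ j)) :
    HasDerivAt (fun t => ∑ p, ∑ q ∈ univ.erase p,
        g (Function.update ξ j t p) (Function.update ξ j t q))
      (∑ q ∈ univ.erase j, (g₁ q + g₂ q)) (ξ j) := by
  have hsplit : (fun t => ∑ p, ∑ q ∈ univ.erase p,
        g (Function.update ξ j t p) (Function.update ξ j t q)) =
      fun t => ∑ q ∈ univ.erase j, (g t (ξ q) + g (ξ q) t) +
        ∑ p ∈ univ.erase j, ∑ q ∈ (univ.erase p).erase j, g (ξ p) (ξ q) := by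
    funext t
    rw [sum_sum_erase_eq_add _ j]
    congr 1
    · refine sum_congr rfl fun q hq => ?_
      rw [Function.update_self, Function.update_of_ne (ne_of_mem_erase hq)]
    · refine sum_congr rfl fun p hp => sum_congr rfl fun q hq => ?_
      rw [Function.update_of_ne (ne_of_mem_erase hp), Function.update_of_ne (ne_of_mem_erase hq)]
  rw [hsplit]
  exact (HasDerivAt.fun_sum fun q _ => (h₁ q).add (h₂ q)).add_const _

end PairSums

lemma sq_norm_le_sum_sq {ι : Type*} [Fintype ι] (ξ : ι → ℝ) : ‖ξ‖ ^ 2 ≤ ∑ j, ξ j ^ 2 := by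
  have hnorm : ‖ξ‖ ≤ √(∑ j, ξ j ^ 2) :=
    (pi_norm_le_iff_of_nonneg (Real.sqrt_nonneg _)).2 fun j =>
      Real.abs_le_sqrt (single_le_sum (fun i _ => sq_nonneg (ξ i)) (mem_univ j))
  calc ‖ξ‖ ^ 2 ≤ √(∑ j, ξ j ^ 2) ^ 2 := by gcongr
    _ = ∑ j, ξ j ^ 2 := Real.sq_sqrt (sum_nonneg fun j _ => sq_nonneg _)

lemma Monotone.sub_mul_sub_nonneg {f : ℝ → ℝ} (hf : Monotone f) (x y : ℝ) :
    0 ≤ (f x - f y) * (x - y) := by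
  rcases le_total x y with h | h
  · exact mul_nonneg_of_nonpos_of_nonpos (sub_nonpos.2 (hf h)) (sub_nonpos.2 h)
  · exact mul_nonneg (sub_nonneg.2 (hf h)) (sub_nonneg.2 h)

lemma vRat_pair_add_swap_nonneg {a : ℝ} (ha : 0 < a) (x x' y y' : ℝ) :
    0 ≤ (vRat a (x' + x) - vRat a (x' - x) - (vRat a (y' + y) - vRat a (y' - y))) * (x - y) +
      (vRat a (x + x') - vRat a (x - x') - (vRat a (y + y') - vRat a (y - y'))) * (x' - y') := by
  have hmono := (vRat_strictMono ha).monotone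
  have hsum := hmono.sub_mul_sub_nonneg (x + x') (y + y')
  have hdiff := hmono.sub_mul_sub_nonneg (x' - x) (y' - y)
  -- by oddness of `v_a` the left side is exactly `hsum + hdiff`
  rw [← neg_sub x' x, ← neg_sub y' y, vRat_neg, vRat_neg, add_comm x', add_comm y']
  linarith

section Bethe

variable {ι κ τ : Type*} [Fintype ι] [DecidableEq ι] [Fintype κ] [Fintype τ]

noncomputable def betheLHS (α : ℝ) (a : κ → ℝ) (b : τ → ℝ) (ξ : ι → ℝ) (j : ι) : ℝ :=
  2 * α * ξ j + (∑ k, vRat (a k) (ξ j)) +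
    ∑ j' ∈ univ.erase j, ∑ l, (vRat (b l) (ξ j' + ξ j) - vRat (b l) (ξ j' - ξ j))

/-- The potential `V` of the paper, with `c j = 2π(μ_j + ε/2)`; the pair sum runs over ordered
pairs, hence the factor `1/2`. -/
noncomputable def betheEnergy (α : ℝ) (c : ι → ℝ) (a : κ → ℝ) (b : τ → ℝ) (ξ : ι → ℝ) : ℝ :=
  ∑ j, (α * ξ j ^ 2 - c j * ξ j + ∑ k, vRatPrimitive (a k) (ξ j)) +
    (∑ j, ∑ j' ∈ univ.erase j, ∑ l,
      (vRatPrimitive (b l) (ξ j + ξ j') + vRatPrimitive (b l) (ξ j - ξ j'))) / 2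

variable {α : ℝ} {a : κ → ℝ} {b : τ → ℝ}

lemma two_mul_sum_sq_le_sum_betheLHS_sub_mul (ha : ∀ k, 0 < a k) (hb : ∀ l, 0 < b l)
    (ξ η : ι → ℝ) :
    2 * α * ∑ j, (ξ j - η j) ^ 2 ≤
      ∑ j, (betheLHS α a b ξ j - betheLHS α a b η j) * (ξ j - η j) := by
  have hsplit : ∀ j, (betheLHS α a b ξ j - betheLHS α a b η j) * (ξ j - η j) =
      2 * α * (ξ j - η j) ^ 2 + ∑ k, (vRat (a k) (ξ j) - vRat (a k) (η j)) * (ξ j - η j) +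
        ∑ j' ∈ univ.erase j, ∑ l,
          (vRat (b l) (ξ j' + ξ j) - vRat (b l) (ξ j' - ξ j) -
            (vRat (b l) (η j' + η j) - vRat (b l) (η j' - η j))) * (ξ j - η j) := by
    intro j
    simp only [betheLHS, sub_mul, add_mul, sum_sub_distrib, sum_mul]
    ring
  have hone : 0 ≤ ∑ j, ∑ k, (vRat (a k) (ξ j) - vRat (a k) (η j)) * (ξ j - η j) :=
    sum_nonneg fun j _ => sum_nonneg fun k _ =>
      (vRat_strictMono (ha k)).monotone.sub_mul_sub_nonneg _ _
  have hpair : 0 ≤ ∑ j, ∑ j' ∈ univ.erase j, ∑ l,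
      (vRat (b l) (ξ j' + ξ j) - vRat (b l) (ξ j' - ξ j) -
        (vRat (b l) (η j' + η j) - vRat (b l) (η j' - η j))) * (ξ j - η j) := by
    refine sum_sum_erase_nonneg_of_add_swap fun p q => ?_
    rw [← sum_add_distrib]
    exact sum_nonneg fun l _ => vRat_pair_add_swap_nonneg (hb l) _ _ _ _
  rw [sum_congr rfl fun j _ => hsplit j, sum_add_distrib, sum_add_distrib, mul_sum]
  linarith

lemma betheLHS_injective (hα : 0 < α) (ha : ∀ k, 0 < a k) (hb : ∀ l, 0 < b l) :
    Function.Injective (betheLHS (ι := ι) α a b) := fun ξ η h => by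
  have hle := two_mul_sum_sq_le_sum_betheLHS_sub_mul (α := α) ha hb ξ η
  simp only [h, sub_self, zero_mul, sum_const_zero] at hle
  have hsq : ∑ j, (ξ j - η j) ^ 2 = 0 :=
    le_antisymm (nonpos_of_mul_nonpos_right hle (by positivity))
      (sum_nonneg fun j _ => sq_nonneg _)
  funext j
  have := (sum_eq_zero_iff_of_nonneg fun j _ => sq_nonneg (ξ j - η j)).1 hsq j (mem_univ j)
  linarith [pow_eq_zero_iff (n := 2) two_ne_zero |>.1 this]

lemma hasDerivAt_betheEnergy_update (c : ι → ℝ) (ξ : ι → ℝ) (j : ι) :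
    HasDerivAt (fun t => betheEnergy α c a b (Function.update ξ j t))
      (betheLHS α a b ξ j - c j) (ξ j) := by
  have hone : HasDerivAt (fun t => ∑ p, (α * Function.update ξ j t p ^ 2 -
      c p * Function.update ξ j t p + ∑ k, vRatPrimitive (a k) (Function.update ξ j t p)))
      (α * (2 * ξ j) - c j * 1 + ∑ k, vRat (a k) (ξ j)) (ξ j) := by
    refine hasDerivAt_sum_update (f := fun p x => α * x ^ 2 - c p * x +
      ∑ k, vRatPrimitive (a k) x) ?_
    have := ((hasDerivAt_pow 2 (ξ j)).const_mul α).fun_sub ((hasDerivAt_id' (ξ j)).const_mul (c j))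
    simpa using this.fun_add (HasDerivAt.fun_sum fun k _ => hasDerivAt_vRatPrimitive (a k) (ξ j))
  have hpair := hasDerivAt_sum_sum_erase_update (ξ := ξ) (j := j)
    (g := fun x y => ∑ l, (vRatPrimitive (b l) (x + y) + vRatPrimitive (b l) (x - y)))
    (fun q => HasDerivAt.fun_sum fun l _ =>
      ((hasDerivAt_vRatPrimitive _ _).comp_add_const _ _).add
        ((hasDerivAt_vRatPrimitive _ _).comp_sub_const _ _))
    (fun q => HasDerivAt.fun_sum fun l _ =>
      ((hasDerivAt_vRatPrimitive _ _).comp_const_add _ _).add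
        ((hasDerivAt_vRatPrimitive _ _).comp_const_sub _ _))
  refine (hone.add (hpair.div_const 2)).congr_deriv ?_
  have hodd : ∀ q, ∑ l, (vRat (b l) (ξ j + ξ q) + vRat (b l) (ξ j - ξ q)) +
      ∑ l, (vRat (b l) (ξ q + ξ j) + -vRat (b l) (ξ q - ξ j)) =
      2 * ∑ l, (vRat (b l) (ξ q + ξ j) - vRat (b l) (ξ q - ξ j)) := fun q => by
    rw [mul_sum, ← sum_add_distrib]
    refine sum_congr rfl fun l _ => ?_
    rw [← neg_sub (ξ q), vRat_neg, add_comm (ξ j)]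
    ring
  rw [sum_congr rfl fun q _ => hodd q, ← mul_sum, betheLHS]
  ring

lemma continuous_betheEnergy (c : ι → ℝ) :
    Continuous (betheEnergy α c a b) := by
  unfold betheEnergy
  fun_prop

lemma le_betheEnergy (hα : 0 ≤ α) (c : ι → ℝ) (ha : ∀ k, 0 < a k) (hb : ∀ l, 0 < b l)
    (ξ : ι → ℝ) :
    α * ‖ξ‖ ^ 2 - (∑ j, |c j|) * ‖ξ‖ ≤ betheEnergy α c a b ξ := by
  have hpair : 0 ≤ (∑ j, ∑ j' ∈ univ.erase j, ∑ l,
      (vRatPrimitive (b l) (ξ j + ξ j') + vRatPrimitive (b l) (ξ j - ξ j'))) / 2 := by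
    refine div_nonneg (sum_nonneg fun j _ => sum_nonneg fun j' _ => sum_nonneg fun l _ => ?_)
      zero_le_two
    exact add_nonneg (vRatPrimitive_nonneg (hb l) _) (vRatPrimitive_nonneg (hb l) _)
  have hone : ∀ j, α * ξ j ^ 2 - |c j| * ‖ξ‖ ≤
      α * ξ j ^ 2 - c j * ξ j + ∑ k, vRatPrimitive (a k) (ξ j) := fun j => by
    have hc : c j * ξ j ≤ |c j| * ‖ξ‖ := calc
      c j * ξ j ≤ |c j| * |ξ j| := (le_abs_self _).trans (abs_mul _ _).le
      _ ≤ |c j| * ‖ξ‖ := by gcongr; exact norm_le_pi_norm ξ j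
    have hW := sum_nonneg fun k (_ : k ∈ univ) => vRatPrimitive_nonneg (ha k) (ξ j)
    linarith
  calc α * ‖ξ‖ ^ 2 - (∑ j, |c j|) * ‖ξ‖ ≤ ∑ j, (α * ξ j ^ 2 - |c j| * ‖ξ‖) := by
        rw [sum_sub_distrib, ← mul_sum, ← sum_mul]
        gcongr
        exact sq_norm_le_sum_sq ξ
    _ ≤ ∑ j, (α * ξ j ^ 2 - c j * ξ j + ∑ k, vRatPrimitive (a k) (ξ j)) :=
        sum_le_sum fun j _ => hone j
    _ ≤ betheEnergy α c a b ξ := le_add_of_nonneg_right hpair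

lemma tendsto_betheEnergy_cocompact (hα : 0 < α) (c : ι → ℝ) (ha : ∀ k, 0 < a k)
    (hb : ∀ l, 0 < b l) : Tendsto (betheEnergy α c a b) (cocompact _) atTop := by
  set C := ∑ j, |c j|
  have hquad : Tendsto (fun r : ℝ => α * r ^ 2 - C * r) atTop atTop := by
    have hlin : Tendsto (fun r : ℝ => α * r - C) atTop atTop :=
      tendsto_atTop_add_const_right _ _ (tendsto_id.const_mul_atTop hα)
    exact (tendsto_id.atTop_mul_atTop₀ hlin).congr fun r => by simp only [id]; ring
  exact tendsto_atTop_mono (le_betheEnergy hα.le c ha hb)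
    (hquad.comp tendsto_norm_cocompact_atTop)

lemma exists_betheLHS_eq (hα : 0 < α) (ha : ∀ k, 0 < a k) (hb : ∀ l, 0 < b l) (c : ι → ℝ) :
    ∃ ξ, betheLHS α a b ξ = c := by
  obtain ⟨ξ, hmin⟩ := (continuous_betheEnergy c).exists_forall_le
    (tendsto_betheEnergy_cocompact hα c ha hb)
  refine ⟨ξ, funext fun j => ?_⟩
  have hloc : IsLocalMin (fun t => betheEnergy α c a b (Function.update ξ j t)) (ξ j) :=
    Eventually.of_forall fun t => by simpa using hmin (Function.update ξ j t)
  linarith [hloc.hasDerivAt_eq_zero (hasDerivAt_betheEnergy_update c ξ j)]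

lemma existsUnique_betheLHS_eq (hα : 0 < α) (ha : ∀ k, 0 < a k) (hb : ∀ l, 0 < b l)
    (c : ι → ℝ) : ∃! ξ, betheLHS α a b ξ = c :=
  let ⟨ξ, hξ⟩ := exists_betheLHS_eq hα ha hb c
  ⟨ξ, hξ, fun _ hη => betheLHS_injective hα ha hb (hη.trans hξ.symm)⟩

open Complex in
lemma exp_two_mul_I_mul_eq_prod (ha : ∀ k, a k ≠ 0) (hb : ∀ l, b l ≠ 0) (ξ : ι → ℝ) (j : ι) :
    exp (2 * I * α * ξ j) = exp (betheLHS α a b ξ j * I) *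
      (∏ k, (I * a k + ξ j) / (I * a k - ξ j)) *
      ∏ j' ∈ univ.erase j, ∏ l,
        (I * b l + ξ j + ξ j') / (I * b l - ξ j - ξ j') *
          ((I * b l + ξ j - ξ j') / (I * b l - ξ j + ξ j')) := by
  have hsplit : 2 * I * α * ξ j = betheLHS α a b ξ j * I +
      ∑ k, -(vRat (a k) (ξ j) : ℂ) * I +
      ∑ j' ∈ univ.erase j, ∑ l,
        (-(vRat (b l) (ξ j + ξ j') : ℂ) * I + -(vRat (b l) (ξ j - ξ j') : ℂ) * I) := by
    have hodd : ∀ j' l, vRat (b l) (ξ j' - ξ j) = -vRat (b l) (ξ j - ξ j') := fun j' l => by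
      rw [← vRat_neg, neg_sub]
    simp only [betheLHS, hodd, add_comm (ξ _) (ξ j)]
    push_cast
    simp only [sum_add_distrib, sum_sub_distrib, sum_neg_distrib, ← sum_mul]
    ring
  rw [hsplit, Complex.exp_add, Complex.exp_add, Complex.exp_sum, Complex.exp_sum]
  congr 2
  · exact Finset.prod_congr rfl fun k _ => exp_neg_vRat_mul_I (ha k) (ξ j)
  · funext j'
    rw [Complex.exp_sum]
    refine Finset.prod_congr rfl fun l _ => ?_
    rw [Complex.exp_add, exp_neg_vRat_mul_I (hb l), exp_neg_vRat_mul_I (hb l)]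
    push_cast
    ring_nf

end Bethe

open Complex in
lemma exp_two_pi_mul_int_add_half_mul_I (m : ℤ) (e : ℕ) :
    exp ((2 * π * ((m : ℝ) + (e : ℝ) / 2) : ℝ) * I) = (-1) ^ e := by
  rw [show ((2 * π * ((m : ℝ) + (e : ℝ) / 2) : ℝ) : ℂ) * I = m * (2 * π * I) + e * (π * I) by
      push_cast; ring,
    Complex.exp_add, exp_int_mul_two_pi_mul_I, one_mul, Complex.exp_nat_mul, exp_pi_mul_I]

theorem ratB_exists_unique_and_bethe_general
    (n K L : ℕ)
    (α : ℝ) (hα : 0 < α) (ε : ℕ)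
    (a : Fin K → ℝ) (b : Fin L → ℝ)
    (ha : ∀ k, 0 < a k) (hb : ∀ l, 0 < b l)
    (μ : Fin n → ℤ) :
    (∃! ξ : Fin n → ℝ, ratBSysMu n K L α ε a b μ ξ) ∧
    (∀ ξ : Fin n → ℝ, ratBSysMu n K L α ε a b μ ξ →
      ∀ j : Fin n,
        Complex.exp (2 * Complex.I * (α : ℂ) * (ξ j : ℂ)) =
        (-1 : ℂ) ^ ε *
        (∏ k, (Complex.I * (a k : ℂ) + (ξ j : ℂ)) /
              (Complex.I * (a k : ℂ) - (ξ j : ℂ))) *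
        (∏ j' ∈ Finset.univ.erase j, ∏ l,
          ((Complex.I * (b l : ℂ) + (ξ j : ℂ) + (ξ j' : ℂ)) /
           (Complex.I * (b l : ℂ) - (ξ j : ℂ) - (ξ j' : ℂ))) *
          ((Complex.I * (b l : ℂ) + (ξ j : ℂ) - (ξ j' : ℂ)) /
           (Complex.I * (b l : ℂ) - (ξ j : ℂ) + (ξ j' : ℂ))))) := by
  have hsys : ∀ ξ, ratBSysMu n K L α ε a b μ ξ ↔
      betheLHS α a b ξ = fun j => 2 * π * ((μ j : ℝ) + (ε : ℝ) / 2) := fun _ => funext_iff.symm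
  refine ⟨?_, fun ξ hξ j => ?_⟩
  · simpa only [hsys] using existsUnique_betheLHS_eq hα ha hb _
  · rw [exp_two_mul_I_mul_eq_prod (fun k => (ha k).ne') (fun l => (hb l).ne'),
      congrFun ((hsys ξ).1 hξ) j,
      exp_two_pi_mul_int_add_half_mul_I]

/-- Existence and uniqueness of the solution of the rational type B critical-point
system; the solution satisfies the rational Bethe Ansatz equations of type B. -/
theorem ratB_exists_unique_and_bethe
    (n K L : ℕ) (hn : 1 ≤ n)
    (α : ℝ) (hα : 0 < α) (ε : ℕ) (hε : ε = 0 ∨ ε = 1)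
    (a : Fin K → ℝ) (b : Fin L → ℝ)
    (ha : ∀ k, 0 < a k) (hb : ∀ l, 0 < b l)
    (μ : Fin n → ℤ) (hμ : ∀ j j' : Fin n, j < j' → μ j' < μ j)
    (hμpos : ∀ j, 0 < μ j) :
    (∃! ξ : Fin n → ℝ, ratBSysMu n K L α ε a b μ ξ) ∧
    (∀ ξ : Fin n → ℝ, ratBSysMu n K L α ε a b μ ξ →
      ∀ j : Fin n,
        Complex.exp (2 * Complex.I * (α : ℂ) * (ξ j : ℂ)) =
        (-1 : ℂ) ^ ε *
        (∏ k, (Complex.I * (a k : ℂ) + (ξ j : ℂ)) /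
              (Complex.I * (a k : ℂ) - (ξ j : ℂ))) *
        (∏ j' ∈ Finset.univ.erase j, ∏ l,
          ((Complex.I * (b l : ℂ) + (ξ j : ℂ) + (ξ j' : ℂ)) /
           (Complex.I * (b l : ℂ) - (ξ j : ℂ) - (ξ j' : ℂ))) *
          ((Complex.I * (b l : ℂ) + (ξ j : ℂ) - (ξ j' : ℂ)) /
           (Complex.I * (b l : ℂ) - (ξ j : ℂ) + (ξ j' : ℂ))))) :=
  ratB_exists_unique_and_bethe_general n K L α hα ε a b ha hb μ
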